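/- For every even integer d ≥ 6 there exist Pauli operators γ₁, …, γ_d on d/2 qubits (each a tensor product of 2×2 Pauli matrices and identities) which are Hermitian, square to the identity, and pairwise anticommute, and such that, setting B = (−i)^{d/2} γ₁ γ₂ ⋯ γ_d, the following weight conditions hold: weight(B) ≥ 3, weight(γ_p) ≥ 2, weight(B γ_p) ≥ 2, and weight(B γ_p γ_q) ≥ 2 for all 1 ≤ p < q ≤ d. -/
import Mathlib


open Matrix

/-- Labels for single-qubit Pauli matrices. -/
inductive P1 : Type
  | I : P1
  | X : P1
  | Y : P1
  | Z : P1
deriving DecidableEq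

/-- The matrix entries of a single-qubit Pauli matrix, with the qubit basis indexed by
`Bool` (`false = |0⟩`, `true = |1⟩`). -/
def P1.entry : P1 → Bool → Bool → ℂ
  | P1.I, a, b => if a = b then 1 else 0
  | P1.X, a, b => if a = b then 0 else 1
  | P1.Y, a, b => if a = b then 0 else if a then Complex.I else -Complex.I
  | P1.Z, a, b => if a = b then (if a then -1 else 1) else 0

/-- The multi-qubit Pauli matrix `⨂_{q ∈ Q} P_{f q}` on the qubits indexed by `Q`,
acting on `(ℂ²)^{⊗Q}` (whose standard basis is indexed by `Q → Bool`). -/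
noncomputable def PauliMatrix {Q : Type*} [Fintype Q] (f : Q → P1) :
    Matrix (Q → Bool) (Q → Bool) ℂ :=
  Matrix.of fun a b => ∏ q, (f q).entry (a q) (b q)

/-- The weight of a Pauli operator: the number of qubits on which it acts nontrivially. -/
noncomputable def pweight {Q : Type*} [Fintype Q] (f : Q → P1) : ℕ :=
  (Finset.univ.filter fun q => f q ≠ P1.I).card

namespace P1

instance : Fintype P1 := ⟨⟨[I, X, Y, Z], by decide⟩, fun a => by cases a <;> decide⟩

def pmul : P1 → P1 → P1
  | I, b => b
  | a, I => a
  | X, X => I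
  | Y, Y => I
  | Z, Z => I
  | X, Y => Z
  | Y, X => Z
  | Y, Z => X
  | Z, Y => X
  | Z, X => Y
  | X, Z => Y

instance : CommMonoid P1 where
  mul := pmul
  one := I
  mul_assoc := by decide
  one_mul := by decide
  mul_one := by decide
  mul_comm := by decide

lemma mul_def (a b : P1) : a * b = pmul a b := rfl

lemma mul_self (a : P1) : a * a = 1 := by cases a <;> rfl

noncomputable def phase : P1 → P1 → ℂ
  | X, Y => Complex.I
  | Y, Z => Complex.I
  | Z, X => Complex.I
  | Y, X => -Complex.I
  | Z, Y => -Complex.I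
  | X, Z => -Complex.I
  | _, _ => 1

lemma phase_ne_zero (a b : P1) : phase a b ≠ 0 := by
  cases a <;> cases b <;> simp [phase, Complex.I_ne_zero]

lemma phase_self (a : P1) : phase a a = 1 := by cases a <;> rfl

def acomm (a b : P1) : Prop := a ≠ I ∧ b ≠ I ∧ a ≠ b

instance (a b : P1) : Decidable (acomm a b) := by unfold acomm; infer_instance

lemma phase_swap (a b : P1) :
    phase a b = (if acomm a b then -1 else 1) * phase b a := by
  cases a <;> cases b <;> simp [phase, acomm] <;> ring

lemma entry_conj (a : P1) (x y : Bool) :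
    (starRingEnd ℂ) (a.entry y x) = a.entry x y := by
  cases a <;> cases x <;> cases y <;> simp [entry]

lemma sum_entry_mul (a b : P1) (x y : Bool) :
    a.entry x false * b.entry false y + a.entry x true * b.entry true y
      = phase a b * (a * b).entry x y := by
  cases a <;> cases b <;> cases x <;> cases y <;>
    simp [entry, phase, mul_def, pmul] <;> ring

end P1

section MatrixLemmas

variable {Q : Type*} [Fintype Q] [DecidableEq Q]

lemma pauliMatrix_mul (f g : Q → P1) :
    PauliMatrix f * PauliMatrix g
      = (∏ q, P1.phase (f q) (g q)) • PauliMatrix (f * g) := by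
  ext x y
  simp only [Matrix.mul_apply, PauliMatrix, Matrix.of_apply, Matrix.smul_apply,
    smul_eq_mul]
  have h1 : ∀ c : Q → Bool,
      (∏ q, (f q).entry (x q) (c q)) * ∏ q, (g q).entry (c q) (y q)
        = ∏ q, ((f q).entry (x q) (c q) * (g q).entry (c q) (y q)) := fun c =>
    (Finset.prod_mul_distrib).symm
  rw [Finset.sum_congr rfl fun c _ => h1 c]
  have h2 := Finset.prod_univ_sum (fun _ : Q => (Finset.univ : Finset Bool))
    (fun q t => (f q).entry (x q) t * (g q).entry t (y q))
  rw [Fintype.piFinset_univ] at h2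
  rw [← h2]
  have h3 : ∀ q : Q, (∑ t : Bool, (f q).entry (x q) t * (g q).entry t (y q))
      = P1.phase (f q) (g q) * ((f q * g q).entry (x q) (y q)) := by
    intro q
    rw [Fintype.sum_bool, add_comm]
    exact P1.sum_entry_mul (f q) (g q) (x q) (y q)
  rw [Finset.prod_congr rfl fun q _ => h3 q, Finset.prod_mul_distrib]
  rfl

lemma pauliMatrix_one : PauliMatrix (1 : Q → P1) = 1 := by
  ext x y
  simp only [PauliMatrix, Matrix.of_apply, Matrix.one_apply]
  by_cases h : x = y
  · subst h; simp [P1.entry, Pi.one_apply]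
  · obtain ⟨q, hq⟩ := Function.ne_iff.mp h
    rw [if_neg h]
    apply Finset.prod_eq_zero (Finset.mem_univ q)
    have : (1 : Q → P1) q = P1.I := rfl
    rw [this]
    simp [P1.entry, hq]

lemma pauliMatrix_conjTranspose (f : Q → P1) : (PauliMatrix f)ᴴ = PauliMatrix f := by
  ext x y
  simp only [Matrix.conjTranspose_apply, PauliMatrix, Matrix.of_apply]
  rw [show (star (∏ q, (f q).entry (y q) (x q)) : ℂ)
      = (starRingEnd ℂ) (∏ q, (f q).entry (y q) (x q)) from rfl, map_prod]
  exact Finset.prod_congr rfl fun q _ => P1.entry_conj (f q) (x q) (y q)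

lemma pauliMatrix_sq (f : Q → P1) : PauliMatrix f * PauliMatrix f = 1 := by
  rw [pauliMatrix_mul]
  have h1 : f * f = 1 := funext fun q => P1.mul_self (f q)
  rw [h1, pauliMatrix_one]
  have : ∀ q : Q, P1.phase (f q) (f q) = 1 := fun q => P1.phase_self (f q)
  rw [Finset.prod_congr rfl fun q _ => this q, Finset.prod_const_one, one_smul]

def acount {Q : Type*} [Fintype Q] (f g : Q → P1) : ℕ :=
  (Finset.univ.filter fun q => P1.acomm (f q) (g q)).card

lemma pauliMatrix_anticomm (f g : Q → P1) (h : acount f g % 2 = 1) :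
    PauliMatrix f * PauliMatrix g + PauliMatrix g * PauliMatrix f = 0 := by
  rw [pauliMatrix_mul, pauliMatrix_mul, mul_comm g f, ← add_smul]
  have key : (∏ q, P1.phase (f q) (g q)) = - ∏ q, P1.phase (g q) (f q) := by
    have h1 : (∏ q, P1.phase (f q) (g q))
        = (∏ q, (if P1.acomm (f q) (g q) then (-1 : ℂ) else 1))
          * ∏ q, P1.phase (g q) (f q) := by
      rw [← Finset.prod_mul_distrib]
      exact Finset.prod_congr rfl fun q _ => P1.phase_swap (f q) (g q)
    have h2 : (∏ q, (if P1.acomm (f q) (g q) then (-1 : ℂ) else 1))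
        = (-1 : ℂ) ^ acount f g := by
      rw [Finset.prod_ite, Finset.prod_const, Finset.prod_const, one_pow, mul_one]
      rfl
    have h3 : (-1 : ℂ) ^ acount f g = -1 := Odd.neg_one_pow (Nat.odd_iff.mpr h)
    rw [h1, h2, h3, neg_one_mul]
  rw [key, neg_add_cancel, zero_smul]

lemma pauliMatrix_list_prod (l : List (Q → P1)) :
    ∃ c : ℂ, c ≠ 0 ∧ (l.map PauliMatrix).prod = c • PauliMatrix l.prod := by
  induction l with
  | nil => exact ⟨1, one_ne_zero, by simp [pauliMatrix_one]⟩
  | cons hd tl ih =>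
    obtain ⟨c, hc, hp⟩ := ih
    refine ⟨c * ∏ q, P1.phase (hd q) (tl.prod q),
      mul_ne_zero hc (Finset.prod_ne_zero_iff.mpr fun q _ => P1.phase_ne_zero _ _), ?_⟩
    rw [List.map_cons, List.prod_cons, hp, Matrix.mul_smul, List.prod_cons]
    rw [show (hd * tl.prod : Q → P1) = (fun q => hd q * tl.prod q) from rfl]
    rw [pauliMatrix_mul, smul_smul]
    rfl

end MatrixLemmas


section Comb

variable {P Q R S : Type*} [Fintype P] [Fintype Q] [Fintype R] [Fintype S]
variable [DecidableEq P]

/-- pointwise product of a family of Pauli words -/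
def Gprod (f : P → Q → P1) : Q → P1 := fun q => ∏ p, f p q

def IsGood (f : P → Q → P1) : Prop :=
  (∀ p q, p ≠ q → acount (f p) (f q) % 2 = 1) ∧
  3 ≤ pweight (Gprod f) ∧
  (∀ p, 2 ≤ pweight (f p)) ∧
  (∀ p, 2 ≤ pweight (Gprod f * f p)) ∧
  (∀ p q, p ≠ q → 2 ≤ pweight (Gprod f * f p * f q))

noncomputable instance {m n : ℕ} (f : Fin m → Fin n → P1) : Decidable (IsGood f) := by
  unfold IsGood; infer_instance

lemma acount_cast (u v : Q → P1) :
    ((acount u v : ℕ) : ZMod 2)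
      = ∑ q, (if P1.acomm (u q) (v q) then (1 : ZMod 2) else 0) := by
  rw [acount, Finset.card_filter]
  push_cast
  exact Finset.sum_congr rfl fun q _ => by split <;> simp

lemma acomm_mul_zmod (a b c : P1) :
    (if P1.acomm a (b * c) then (1 : ZMod 2) else 0)
      = (if P1.acomm a b then (1 : ZMod 2) else 0)
        + (if P1.acomm a c then (1 : ZMod 2) else 0) := by
  revert a b c; decide

lemma acomm_one (a : P1) : ¬ P1.acomm a P1.I := by revert a; decide

lemma acount_prod_cast (u : Q → P1) {I : Type*} (s : Finset I) (g : I → Q → P1) :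
    ((acount u (∏ i ∈ s, g i) : ℕ) : ZMod 2)
      = ∑ i ∈ s, ((acount u (g i) : ℕ) : ZMod 2) := by
  induction s using Finset.cons_induction with
  | empty =>
    rw [Finset.prod_empty, Finset.sum_empty, acount_cast]
    apply Finset.sum_eq_zero
    intro q _
    exact if_neg (fun hq => acomm_one (u q) hq)
  | cons i s hi ih =>
    rw [Finset.prod_cons, Finset.sum_cons, ← ih, acount_cast, acount_cast, acount_cast,
      ← Finset.sum_add_distrib]
    refine Finset.sum_congr rfl fun q _ => ?_
    have h2 : (g i * ∏ j ∈ s, g j) q = g i q * (∏ j ∈ s, g j) q := rfl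
    rw [h2, acomm_mul_zmod]

lemma zmod2_one (n : ℕ) (h : n % 2 = 1) : ((n : ℕ) : ZMod 2) = 1 := by
  have h1 := (ZMod.natCast_mod n 2).symm
  rw [h] at h1
  simpa using h1

lemma zmod2_zero (n : ℕ) (h : n % 2 = 0) : ((n : ℕ) : ZMod 2) = 0 := by
  have h1 := (ZMod.natCast_mod n 2).symm
  rw [h] at h1
  simpa using h1

lemma zmod2_one_iff (n : ℕ) : ((n : ℕ) : ZMod 2) = 1 ↔ n % 2 = 1 := by
  constructor
  · intro h
    rcases Nat.mod_two_eq_zero_or_one n with h2 | h2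
    · rw [zmod2_zero n h2] at h; exact absurd h.symm one_ne_zero
    · exact h2
  · exact zmod2_one n

lemma acount_self (u : Q → P1) : acount u u = 0 := by
  rw [acount, Finset.card_eq_zero, Finset.filter_eq_empty_iff]
  intro q _
  have : ∀ a : P1, ¬ P1.acomm a a := by decide
  exact this (u q)

lemma acount_Gprod (f : P → Q → P1)
    (h : ∀ p q, p ≠ q → acount (f p) (f q) % 2 = 1)
    (hm : Fintype.card P % 2 = 0) (p : P) :
    acount (f p) (Gprod f) % 2 = 1 := by
  rw [← zmod2_one_iff]
  have hG : Gprod f = ∏ p', f p' := by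
    funext q; rw [Finset.prod_apply]; rfl
  rw [hG, acount_prod_cast]
  have hsum : ∀ p' : P, ((acount (f p) (f p') : ℕ) : ZMod 2)
      = 1 + (if p' = p then (1 : ZMod 2) else 0) := by
    intro p'
    by_cases hp : p' = p
    · subst hp; rw [acount_self, if_pos rfl]; decide
    · rw [if_neg hp, add_zero, zmod2_one_iff]
      exact h p p' (Ne.symm hp)
  rw [Finset.sum_congr rfl fun p' _ => hsum p', Finset.sum_add_distrib,
    Finset.sum_const, Finset.sum_ite_eq' Finset.univ p fun _ => (1 : ZMod 2)]
  rw [if_pos (Finset.mem_univ p)]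
  have hc : (Fintype.card P • (1 : ZMod 2)) = 0 := by
    rw [nsmul_eq_mul, mul_one]
    exact zmod2_zero _ hm
  rw [show (Finset.univ : Finset P).card = Fintype.card P from rfl, hc, zero_add]

end Comb

section Pad

variable {P Q R S : Type*} [Fintype P] [Fintype Q] [Fintype R] [Fintype S]

lemma pweight_sum_elim (u : Q → P1) (v : S → P1) :
    pweight (Sum.elim u v) = pweight u + pweight v := by
  unfold pweight
  rw [Finset.card_filter, Finset.card_filter, Finset.card_filter, Fintype.sum_sum_type]
  rfl

lemma acount_sum_elim (u u' : Q → P1) (v v' : S → P1) :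
    acount (Sum.elim u v) (Sum.elim u' v') = acount u u' + acount v v' := by
  unfold acount
  rw [Finset.card_filter, Finset.card_filter, Finset.card_filter, Fintype.sum_sum_type]
  rfl

lemma sum_elim_mul (u u' : Q → P1) (v v' : S → P1) :
    (Sum.elim u v : Q ⊕ S → P1) * Sum.elim u' v' = Sum.elim (u * u') (v * v') := by
  funext x; cases x <;> rfl

lemma mul_mul_self (u v : Q → P1) : u * v * u = v := by
  rw [mul_comm u v, mul_assoc]
  have : u * u = 1 := funext fun q => P1.mul_self (u q)
  rw [this, mul_one]

lemma pauli_sq' (u : Q → P1) : u * u = 1 := funext fun q => P1.mul_self (u q)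

lemma pweight_one : pweight (1 : Q → P1) = 0 := by
  unfold pweight
  rw [Finset.card_eq_zero, Finset.filter_eq_empty_iff]
  intro q _
  simp only [Pi.one_apply, ne_eq, not_not]
  rfl

variable [DecidableEq P] [DecidableEq R]

lemma isGood_pad (f : P → Q → P1) (δ : R → S → P1)
    (hf : IsGood f) (hδ : IsGood δ)
    (hm : Fintype.card P % 2 = 0) (hr : Fintype.card R % 2 = 0) :
    IsGood (Sum.elim (fun p => Sum.elim (f p) 1)
      (fun r => Sum.elim (Gprod f) (δ r)) : P ⊕ R → Q ⊕ S → P1) := by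
  obtain ⟨hf1, hf2, hf3, hf4, hf5⟩ := hf
  obtain ⟨hδ1, hδ2, hδ3, hδ4, hδ5⟩ := hδ
  set F : P ⊕ R → Q ⊕ S → P1 := Sum.elim (fun p => Sum.elim (f p) 1)
      (fun r => Sum.elim (Gprod f) (δ r)) with hF
  have hGpow : ∀ (q : Q), (Gprod f q) ^ (Fintype.card R) = 1 := by
    intro q
    obtain ⟨t, ht⟩ := (Nat.even_iff).mpr hr
    rw [ht, pow_add, ← mul_pow]
    rw [P1.mul_self, one_pow]
  have hG : Gprod F = Sum.elim (Gprod f) (Gprod δ) := by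
    funext x
    cases x with
    | inl q =>
      show (∏ z : P ⊕ R, F z (Sum.inl q)) = Gprod f q
      rw [Fintype.prod_sum_type]
      have h1 : (∏ p : P, F (Sum.inl p) (Sum.inl q)) = Gprod f q := rfl
      have h2 : (∏ r : R, F (Sum.inr r) (Sum.inl q))
          = (Gprod f q) ^ (Fintype.card R) := by
        have he : ∀ r : R, F (Sum.inr r) (Sum.inl q) = Gprod f q := fun r => rfl
        rw [Finset.prod_congr rfl fun r _ => he r, Finset.prod_const]
        rfl
      rw [h1, h2, hGpow, mul_one]
    | inr s =>
      show (∏ z : P ⊕ R, F z (Sum.inr s)) = Gprod δ s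
      rw [Fintype.prod_sum_type]
      have h1 : (∏ p : P, F (Sum.inl p) (Sum.inr s)) = 1 := Finset.prod_const_one
      rw [h1, one_mul]; rfl
  refine ⟨?_, ?_, ?_, ?_, ?_⟩
  · -- anticommutation
    rintro (p | r) (p' | r') hne
    · have : p ≠ p' := fun h => hne (by rw [h])
      show acount (Sum.elim (f p) 1) (Sum.elim (f p') 1) % 2 = 1
      rw [acount_sum_elim, acount_self]
      simpa using hf1 p p' this
    · show acount (Sum.elim (f p) 1) (Sum.elim (Gprod f) (δ r')) % 2 = 1
      rw [acount_sum_elim]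
      have h2 : acount (1 : S → P1) (δ r') = 0 := by
        rw [acount, Finset.card_eq_zero, Finset.filter_eq_empty_iff]
        intro s _
        intro hc
        exact acomm_one (δ r' s) ⟨hc.2.1, hc.1, fun h => hc.2.2 h.symm⟩
      rw [h2, Nat.add_zero]
      exact acount_Gprod f hf1 hm p
    · show acount (Sum.elim (Gprod f) (δ r)) (Sum.elim (f p') 1) % 2 = 1
      rw [acount_sum_elim]
      have h2 : acount (δ r) (1 : S → P1) = 0 := by
        rw [acount, Finset.card_eq_zero, Finset.filter_eq_empty_iff]
        intro s _
        exact fun hc => acomm_one (δ r s) hc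
      rw [h2, Nat.add_zero]
      have key := acount_Gprod f hf1 hm p'
      have hsymm : acount (Gprod f) (f p') = acount (f p') (Gprod f) := by
        unfold acount
        congr 1
        apply Finset.filter_congr
        intro q _
        constructor
        · exact fun hc => ⟨hc.2.1, hc.1, fun h => hc.2.2 h.symm⟩
        · exact fun hc => ⟨hc.2.1, hc.1, fun h => hc.2.2 h.symm⟩
      rw [hsymm]; exact key
    · have : r ≠ r' := fun h => hne (by rw [h])
      show acount (Sum.elim (Gprod f) (δ r)) (Sum.elim (Gprod f) (δ r')) % 2 = 1
      rw [acount_sum_elim, acount_self]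
      simpa using hδ1 r r' this
  · -- weight of Gprod F
    rw [hG, pweight_sum_elim]
    exact le_trans hf2 (Nat.le_add_right _ _)
  · -- weights of F p
    rintro (p | r)
    · show 2 ≤ pweight (Sum.elim (f p) 1)
      rw [pweight_sum_elim, pweight_one, Nat.add_zero]
      exact hf3 p
    · show 2 ≤ pweight (Sum.elim (Gprod f) (δ r))
      rw [pweight_sum_elim]
      exact le_trans (le_trans (by norm_num) hf2) (Nat.le_add_right _ _)
  · -- weights of Gprod F * F p
    rintro (p | r)
    · rw [hG]
      show 2 ≤ pweight (Sum.elim (Gprod f) (Gprod δ) * Sum.elim (f p) 1)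
      rw [sum_elim_mul, pweight_sum_elim]
      exact le_trans (hf4 p) (Nat.le_add_right _ _)
    · rw [hG]
      show 2 ≤ pweight (Sum.elim (Gprod f) (Gprod δ) * Sum.elim (Gprod f) (δ r))
      rw [sum_elim_mul, pweight_sum_elim, pauli_sq', pweight_one, Nat.zero_add]
      exact hδ4 r
  · -- weights of Gprod F * F p * F q
    rintro (p | r) (p' | r') hne
    · have hpp : p ≠ p' := fun h => hne (by rw [h])
      rw [hG]
      show 2 ≤ pweight ((Sum.elim (Gprod f) (Gprod δ) * Sum.elim (f p) 1)
        * Sum.elim (f p') 1)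
      rw [sum_elim_mul, sum_elim_mul, pweight_sum_elim]
      exact le_trans (hf5 p p' hpp) (Nat.le_add_right _ _)
    · rw [hG]
      show 2 ≤ pweight ((Sum.elim (Gprod f) (Gprod δ) * Sum.elim (f p) 1)
        * Sum.elim (Gprod f) (δ r'))
      rw [sum_elim_mul, sum_elim_mul, pweight_sum_elim, mul_mul_self]
      exact le_trans (hf3 p) (Nat.le_add_right _ _)
    · rw [hG]
      show 2 ≤ pweight ((Sum.elim (Gprod f) (Gprod δ) * Sum.elim (Gprod f) (δ r))
        * Sum.elim (f p') 1)
      rw [sum_elim_mul, sum_elim_mul, pweight_sum_elim]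
      have : Gprod f * Gprod f * f p' = f p' := by
        rw [pauli_sq', one_mul]
      rw [this]
      exact le_trans (hf3 p') (Nat.le_add_right _ _)
    · have hrr : r ≠ r' := fun h => hne (by rw [h])
      rw [hG]
      show 2 ≤ pweight ((Sum.elim (Gprod f) (Gprod δ) * Sum.elim (Gprod f) (δ r))
        * Sum.elim (Gprod f) (δ r'))
      rw [sum_elim_mul, sum_elim_mul, pweight_sum_elim]
      have : Gprod f * Gprod f * Gprod f = Gprod f := by
        rw [pauli_sq', one_mul]
      rw [this]
      exact le_trans (le_trans (by norm_num) hf2) (Nat.le_add_right _ _)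

end Pad

section Reindex

variable {P Q P' Q' : Type*} [Fintype P] [Fintype Q] [Fintype P'] [Fintype Q']

lemma pweight_reindex (e : Q' ≃ Q) (u : Q → P1) :
    pweight (fun q' => u (e q')) = pweight u := by
  unfold pweight
  apply Finset.card_bij (fun q' _ => e q')
  · intro a ha
    simp only [Finset.mem_filter, Finset.mem_univ, true_and] at ha ⊢
    exact ha
  · intro a _ b _ hab
    exact e.injective hab
  · intro b hb
    refine ⟨e.symm b, ?_, by simp⟩
    simp only [Finset.mem_filter, Finset.mem_univ, true_and] at hb ⊢
    simpa using hb

lemma acount_reindex (e : Q' ≃ Q) (u v : Q → P1) :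
    acount (fun q' => u (e q')) (fun q' => v (e q')) = acount u v := by
  unfold acount
  apply Finset.card_bij (fun q' _ => e q')
  · intro a ha
    simp only [Finset.mem_filter, Finset.mem_univ, true_and] at ha ⊢
    exact ha
  · intro a _ b _ hab
    exact e.injective hab
  · intro b hb
    refine ⟨e.symm b, ?_, by simp⟩
    simp only [Finset.mem_filter, Finset.mem_univ, true_and] at hb ⊢
    simpa using hb

lemma isGood_reindex (eP : P' ≃ P) (eQ : Q' ≃ Q) (f : P → Q → P1)
    (hf : IsGood f) : IsGood (fun p' q' => f (eP p') (eQ q')) := by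
  obtain ⟨h1, h2, h3, h4, h5⟩ := hf
  have hG : Gprod (fun p' q' => f (eP p') (eQ q')) = fun q' => Gprod f (eQ q') := by
    funext q'
    exact Fintype.prod_equiv eP _ _ fun p' => rfl
  refine ⟨?_, ?_, ?_, ?_, ?_⟩
  · intro p q hpq
    rw [acount_reindex eQ]
    exact h1 _ _ fun h => hpq (eP.injective h)
  · rw [hG, pweight_reindex eQ]
    exact h2
  · intro p
    rw [pweight_reindex eQ]
    exact h3 _
  · intro p
    have : Gprod (fun p' q' => f (eP p') (eQ q')) * (fun q' => f (eP p) (eQ q'))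
        = fun q' => (Gprod f * f (eP p)) (eQ q') := by
      rw [hG]; rfl
    rw [this, pweight_reindex eQ]
    exact h4 _
  · intro p q hpq
    have : Gprod (fun p' q' => f (eP p') (eQ q')) * (fun q' => f (eP p) (eQ q'))
        * (fun q' => f (eP q) (eQ q'))
        = fun q' => (Gprod f * f (eP p) * f (eP q)) (eQ q') := by
      rw [hG]; rfl
    rw [this, pweight_reindex eQ]
    exact h5 _ _ fun h => hpq (eP.injective h)

end Reindex

section Base

open P1 in
def fam3 : Fin 6 → Fin 3 → P1 :=
  ![![I, X, X], ![I, X, Z], ![X, I, Y], ![Z, I, Y], ![Y, Z, I], ![Y, Y, I]]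

open P1 in
def fam4 : Fin 8 → Fin 4 → P1 :=
  ![![I, I, X, X], ![I, I, X, Z], ![I, X, I, Y], ![I, Z, I, Y],
    ![I, Y, Z, I], ![X, Y, Y, I], ![Z, Y, Y, I], ![Y, Y, Y, I]]

open P1 in
def fam5 : Fin 10 → Fin 5 → P1 :=
  ![![I, I, I, X, X], ![I, I, I, X, Z], ![I, I, I, X, Y], ![I, I, X, Z, I],
    ![I, I, Z, Z, I], ![I, X, I, Y, I], ![X, X, Y, Z, I], ![Z, X, Y, Z, I],
    ![Y, Z, I, Y, I], ![Y, Y, I, Y, I]]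

lemma fam3_good : IsGood fam3 := by decide
lemma fam4_good : IsGood fam4 := by decide
lemma fam5_good : IsGood fam5 := by decide

end Base

lemma core : ∀ n : ℕ, 3 ≤ n → ∃ f : Fin (2 * n) → Fin n → P1, IsGood f := by
  intro n
  induction n using Nat.strong_induction_on with
  | _ n ih =>
    intro hn
    by_cases h6 : n < 6
    · interval_cases n
      · exact ⟨fun p q => fam3 (finCongr (by norm_num) p) q,
          isGood_reindex (finCongr (by norm_num)) (Equiv.refl _) fam3 fam3_good⟩
      · exact ⟨fun p q => fam4 (finCongr (by norm_num) p) q,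
          isGood_reindex (finCongr (by norm_num)) (Equiv.refl _) fam4 fam4_good⟩
      · exact ⟨fun p q => fam5 (finCongr (by norm_num) p) q,
          isGood_reindex (finCongr (by norm_num)) (Equiv.refl _) fam5 fam5_good⟩
    · push_neg at h6
      obtain ⟨f, hf⟩ := ih (n - 3) (by omega) (by omega)
      have hpad := isGood_pad f fam3 hf fam3_good
        (by simp) (by simp)
      have eP : Fin (2 * n) ≃ (Fin (2 * (n - 3)) ⊕ Fin 6) :=
        (finCongr (by omega)).trans finSumFinEquiv.symm
      have eQ : Fin n ≃ (Fin (n - 3) ⊕ Fin 3) :=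
        (finCongr (by omega)).trans finSumFinEquiv.symm
      exact ⟨_, isGood_reindex eP eQ _ hpad⟩

/-- For every even `d ≥ 6` there are `d` pairwise anticommuting Hermitian Pauli operators
`γ₁, …, γ_d` on `d/2` qubits squaring to the identity such that, with
`B = (-i)^{d/2} γ₁ ⋯ γ_d`, one has `weight(B) ≥ 3`, `weight(γ_p) ≥ 2`,
`weight(B γ_p) ≥ 2` and `weight(B γ_p γ_q) ≥ 2` for all `1 ≤ p < q ≤ d`. -/
theorem stmt19 (d : ℕ) (hd6 : 6 ≤ d) (hdeven : Even d) :
    ∃ γ : Fin d → Matrix (Fin (d / 2) → Bool) (Fin (d / 2) → Bool) ℂ,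
      -- each γ_p is a Pauli operator (a phase times a tensor product of Pauli matrices)
      (∀ p, ∃ (c : ℂ) (f : Fin (d / 2) → P1), c ≠ 0 ∧ γ p = c • PauliMatrix f) ∧
      -- Hermitian,
      (∀ p, (γ p)ᴴ = γ p) ∧
      -- squaring to the identity,
      (∀ p, γ p * γ p = 1) ∧
      -- pairwise anticommuting;
      (∀ p q, p ≠ q → γ p * γ q + γ q * γ p = 0) ∧
      -- and, with B = (-i)^{d/2} γ₁ ⋯ γ_d, the weight conditions hold:
      (∀ B, B = ((-Complex.I) ^ (d / 2)) • ((List.ofFn γ).prod) →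
        -- weight(B) ≥ 3;
        (∃ (c : ℂ) (f : Fin (d / 2) → P1), c ≠ 0 ∧ B = c • PauliMatrix f ∧
          3 ≤ pweight f) ∧
        -- weight(γ_p) ≥ 2;
        (∀ p, ∃ (c : ℂ) (f : Fin (d / 2) → P1), c ≠ 0 ∧ γ p = c • PauliMatrix f ∧
          2 ≤ pweight f) ∧
        -- weight(B γ_p) ≥ 2;
        (∀ p, ∃ (c : ℂ) (f : Fin (d / 2) → P1), c ≠ 0 ∧ B * γ p = c • PauliMatrix f ∧
          2 ≤ pweight f) ∧
        -- weight(B γ_p γ_q) ≥ 2 for p < q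
        (∀ p q, p < q → ∃ (c : ℂ) (f : Fin (d / 2) → P1), c ≠ 0 ∧
          B * γ p * γ q = c • PauliMatrix f ∧ 2 ≤ pweight f)) := by
  
  obtain ⟨k, hk⟩ := hdeven
  have hd2 : 2 * (d / 2) = d := by omega
  have hn3 : 3 ≤ d / 2 := by omega
  obtain ⟨f0, hf0⟩ := core (d / 2) hn3
  set f : Fin d → Fin (d / 2) → P1 := fun p q => f0 (finCongr hd2.symm p) q with hfdef
  have hf : IsGood f := isGood_reindex (finCongr hd2.symm) (Equiv.refl _) f0 hf0
  obtain ⟨h1, h2, h3, h4, h5⟩ := hf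
  refine ⟨fun p => PauliMatrix (f p), ?_, ?_, ?_, ?_, ?_⟩
  · exact fun p => ⟨1, f p, one_ne_zero, (one_smul _ _).symm⟩
  · exact fun p => pauliMatrix_conjTranspose (f p)
  · exact fun p => pauliMatrix_sq (f p)
  · exact fun p q hpq => pauliMatrix_anticomm (f p) (f q) (h1 p q hpq)
  · intro B hB
    have hlist : List.ofFn (fun p => PauliMatrix (f p)) = (List.ofFn f).map PauliMatrix := by
      rw [List.map_ofFn]; rfl
    obtain ⟨c0, hc0, hprod⟩ := pauliMatrix_list_prod (List.ofFn f)
    have hGf : (List.ofFn f).prod = Gprod f := by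
      rw [List.prod_ofFn]
      funext q; rw [Finset.prod_apply]; rfl
    have hB' : B = ((-Complex.I) ^ (d / 2) * c0) • PauliMatrix (Gprod f) := by
      rw [hB, hlist, hprod, hGf, smul_smul]
    have hcB : (-Complex.I) ^ (d / 2) * c0 ≠ 0 :=
      mul_ne_zero (pow_ne_zero _ (neg_ne_zero.mpr Complex.I_ne_zero)) hc0
    refine ⟨⟨_, Gprod f, hcB, hB', h2⟩,
      fun p => ⟨1, f p, one_ne_zero, (one_smul _ _).symm, h3 p⟩, ?_, ?_⟩
    · intro p
      refine ⟨((-Complex.I) ^ (d / 2) * c0) * ∏ q, P1.phase (Gprod f q) (f p q),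
        Gprod f * f p,
        mul_ne_zero hcB
          (Finset.prod_ne_zero_iff.mpr fun q _ => P1.phase_ne_zero _ _), ?_, h4 p⟩
      rw [hB', Matrix.smul_mul, pauliMatrix_mul, smul_smul]
    · intro p q hpq
      refine ⟨(((-Complex.I) ^ (d / 2) * c0) * ∏ q', P1.phase (Gprod f q') (f p q'))
          * ∏ q', P1.phase ((Gprod f * f p) q') (f q q'),
        Gprod f * f p * f q,
        mul_ne_zero
          (mul_ne_zero hcB
            (Finset.prod_ne_zero_iff.mpr fun q' _ => P1.phase_ne_zero _ _))
          (Finset.prod_ne_zero_iff.mpr fun q' _ => P1.phase_ne_zero _ _),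
        ?_, h5 p q (Fin.ne_of_lt hpq)⟩
      rw [hB', Matrix.smul_mul, pauliMatrix_mul, smul_smul, Matrix.smul_mul,
        pauliMatrix_mul, smul_smul]
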